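/- Let ρ ∈ (0,1), δ_max > 0, τ ∈ ℕ with 1 ≤ τ, and T₂ > T₁ + τ. Define the triangular shock δ_t = δ_max (t − T₁)/τ for T₁ ≤ t ≤ T₁+τ, δ_t = δ_max (T₂ − t)/(T₂ − T₁ − τ) for T₁+τ < t ≤ T₂, and δ_t = 0 otherwise. Then for every interior ramp-up date t ∈ {T₁+1, …, T₁+τ−1}, the second difference of T_t = Σ_{j≥0} ρ^j δ_{t+1+j} satisfies Δ²T_t = δ_max ρ^{T₁+τ−t} [ −1/τ + (ρ^{T₂−T₁−τ} − 1)/(T₂ − T₁ − τ) ] < 0. -/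

import Mathlib

/-!
Discounting commutes with differencing: `Δ²T_t = ∑_{j ≥ 0} ρ^j Δ²δ_{t+1+j}`, the sum being finite
because the shock has bounded support. The triangular profile is piecewise linear, so `Δ²δ`
vanishes except at its kinks; seen from an interior ramp-up date the only kinks ahead are the peak
`T₁ + τ + 1`, where `Δ²δ = -δmax (1/τ + 1/D)`, and the end `T₂ + 1`, where `Δ²δ = δmax / D`
(`D = T₂ - T₁ - τ`). The end is discounted by the further factor `ρ^D < 1`, so it cannot
compensate the peak and `Δ²T_t < 0`.
-/

section SecondDifference

variable {R : Type*} [Ring R] [TopologicalSpace R]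

def secondDiff (f : ℤ → R) (t : ℤ) : R := f t - 2 * f (t - 1) + f (t - 2)

noncomputable def presentValue (ρ : R) (δ : ℤ → R) (t : ℤ) : R :=
  ∑' j : ℕ, ρ ^ j * δ (t + 1 + j)

theorem summable_pow_mul_shift_of_eventually_zero {δ : ℤ → R} {N : ℤ}
    (hδ : ∀ s, N < s → δ s = 0) (ρ : R) (t : ℤ) :
    Summable fun j : ℕ => ρ ^ j * δ (t + 1 + j) := by
  refine summable_of_ne_finset_zero (s := Finset.range (N - t).toNat) fun j hj => ?_
  rw [Finset.mem_range, not_lt] at hj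
  rw [hδ _ (by omega), mul_zero]

theorem secondDiff_presentValue [IsTopologicalRing R] [T2Space R] {ρ : R} {δ : ℤ → R}
    (hδ : ∀ t, Summable fun j : ℕ => ρ ^ j * δ (t + 1 + j)) (t : ℤ) :
    secondDiff (presentValue ρ δ) t = ∑' j : ℕ, ρ ^ j * secondDiff δ (t + 1 + j) := by
  unfold secondDiff presentValue
  rw [← (hδ (t - 1)).tsum_mul_left 2, ← (hδ t).tsum_sub ((hδ (t - 1)).mul_left 2),
    ← ((hδ t).sub ((hδ (t - 1)).mul_left 2)).tsum_add (hδ (t - 2))]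
  refine tsum_congr fun j => ?_
  rw [show t - 1 + 1 + (j : ℤ) = t + 1 + j - 1 by ring,
    show t - 2 + 1 + (j : ℤ) = t + 1 + j - 2 by ring]
  noncomm_ring

end SecondDifference

theorem cast_sub_sub_pos_of_add_lt {a b : ℤ} {n : ℕ} (h : a + n < b) :
    0 < (b : ℝ) - a - n := by
  rw [sub_sub, sub_pos]
  exact_mod_cast h

noncomputable def triangularShock (δmax : ℝ) (τ : ℕ) (T₁ T₂ : ℤ) (s : ℤ) : ℝ :=
  if T₁ ≤ s ∧ s ≤ T₁ + (τ : ℤ) then δmax * ((s : ℝ) - (T₁ : ℝ)) / (τ : ℝ)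
  else if T₁ + (τ : ℤ) < s ∧ s ≤ T₂ then
    δmax * ((T₂ : ℝ) - (s : ℝ)) / ((T₂ : ℝ) - (T₁ : ℝ) - (τ : ℝ))
  else 0

namespace triangularShock

variable {δmax : ℝ} {τ : ℕ} {T₁ T₂ : ℤ} {s : ℤ}

theorem eq_of_le_peak (h₁ : T₁ ≤ s) (h₂ : s ≤ T₁ + τ) :
    triangularShock δmax τ T₁ T₂ s = δmax * ((s : ℝ) - T₁) / τ :=
  if_pos ⟨h₁, h₂⟩

theorem eq_of_peak_le (hτ : 1 ≤ τ) (hT₂ : T₁ + τ < T₂) (h₁ : T₁ + τ ≤ s) (h₂ : s ≤ T₂) :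
    triangularShock δmax τ T₁ T₂ s = δmax * ((T₂ : ℝ) - s) / ((T₂ : ℝ) - T₁ - τ) := by
  rcases h₁.eq_or_lt with rfl | h₁
  · have hτ : (τ : ℝ) ≠ 0 := by positivity
    have hD := (cast_sub_sub_pos_of_add_lt hT₂).ne'
    rw [eq_of_le_peak (by omega) le_rfl]
    push_cast
    field_simp
    ring
  · exact (if_neg (by omega)).trans (if_pos ⟨h₁, h₂⟩)

theorem eq_zero_of_le (hT₂ : T₁ + τ < T₂) (h : T₂ ≤ s) :
    triangularShock δmax τ T₁ T₂ s = 0 := by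
  unfold triangularShock
  rw [if_neg (by omega)]
  split_ifs
  · rw [show s = T₂ by omega, sub_self, mul_zero, zero_div]
  · rfl

theorem secondDiff_eq_zero (hτ : 1 ≤ τ) (hT₂ : T₁ + τ < T₂) (h₁ : T₁ + 2 ≤ s)
    (h₂ : s ≠ T₁ + τ + 1) (h₃ : s ≠ T₂ + 1) :
    secondDiff (triangularShock δmax τ T₁ T₂) s = 0 := by
  unfold secondDiff
  rcases (show s ≤ T₁ + τ ∨ (T₁ + τ + 2 ≤ s ∧ s ≤ T₂) ∨ T₂ + 2 ≤ s by omega)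
    with h | ⟨h, h'⟩ | h
  · rw [eq_of_le_peak (by omega) h, eq_of_le_peak (by omega) (by omega),
      eq_of_le_peak (by omega) (by omega)]
    push_cast
    ring
  · rw [eq_of_peak_le hτ hT₂ (by omega) h', eq_of_peak_le hτ hT₂ (by omega) (by omega),
      eq_of_peak_le hτ hT₂ (by omega) (by omega)]
    push_cast
    ring
  · rw [eq_zero_of_le hT₂ (by omega), eq_zero_of_le hT₂ (by omega), eq_zero_of_le hT₂ (by omega)]
    ring

theorem secondDiff_peak (hτ : 1 ≤ τ) (hT₂ : T₁ + τ < T₂) :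
    secondDiff (triangularShock δmax τ T₁ T₂) (T₁ + τ + 1) =
      δmax * (-(1 / τ) - 1 / ((T₂ : ℝ) - T₁ - τ)) := by
  have hτ' : (τ : ℝ) ≠ 0 := by positivity
  have hD := (cast_sub_sub_pos_of_add_lt hT₂).ne'
  unfold secondDiff
  rw [eq_of_peak_le hτ hT₂ (by omega) (by omega), eq_of_le_peak (by omega) (by omega),
    eq_of_le_peak (by omega) (by omega)]
  push_cast
  field_simp
  ring

theorem secondDiff_end (hτ : 1 ≤ τ) (hT₂ : T₁ + τ < T₂) :
    secondDiff (triangularShock δmax τ T₁ T₂) (T₂ + 1) = δmax / ((T₂ : ℝ) - T₁ - τ) := by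
  have hD := (cast_sub_sub_pos_of_add_lt hT₂).ne'
  unfold secondDiff
  rw [eq_zero_of_le hT₂ (by omega), eq_of_peak_le hτ hT₂ (by omega) (by omega),
    eq_of_peak_le hτ hT₂ (by omega) (by omega)]
  push_cast
  field_simp
  ring

end triangularShock

theorem secondDiff_presentValue_triangularShock {ρ δmax : ℝ} {τ : ℕ} {T₁ T₂ : ℤ}
    (hτ : 1 ≤ τ) (hT₂ : T₁ + τ < T₂) {t : ℤ} (ht₁ : T₁ + 1 ≤ t) (ht₂ : t ≤ T₁ + τ) :
    secondDiff (presentValue ρ (triangularShock δmax τ T₁ T₂)) t =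
      δmax * ρ ^ (T₁ + τ - t).toNat *
        (-(1 / τ) + (ρ ^ (T₂ - T₁ - τ).toNat - 1) / ((T₂ : ℝ) - T₁ - τ)) := by
  set a := (T₁ + τ - t).toNat
  set d := (T₂ - T₁ - τ).toNat
  have ha : (a : ℤ) = T₁ + τ - t := Int.toNat_of_nonneg (by omega)
  have hd : (d : ℤ) = T₂ - T₁ - τ := Int.toNat_of_nonneg (by omega)
  have hD := (cast_sub_sub_pos_of_add_lt hT₂).ne'
  have hsummable := summable_pow_mul_shift_of_eventually_zero
    (fun _ hs => triangularShock.eq_zero_of_le (δmax := δmax) hT₂ hs.le) ρ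
  -- only the kinks at the peak and at the end of the ramp-down lie ahead of `t`
  rw [secondDiff_presentValue hsummable, tsum_eq_sum (s := {a, a + d}), Finset.sum_pair (by omega),
    show t + 1 + ((a : ℕ) : ℤ) = T₁ + τ + 1 by omega,
    show t + 1 + ((a + d : ℕ) : ℤ) = T₂ + 1 by push_cast; omega,
    triangularShock.secondDiff_peak hτ hT₂, triangularShock.secondDiff_end hτ hT₂, pow_add]
  · field_simp
    ring
  · intro j hj
    simp only [Finset.mem_insert, Finset.mem_singleton, not_or] at hj
    rw [triangularShock.secondDiff_eq_zero hτ hT₂ (by omega) (by omega) (by omega), mul_zero]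

/-- The triangular technology profile violates convexity of the present-value term
on interior ramp-up dates: the second difference is the given negative closed form. -/
theorem stmt10 (ρ δmax : ℝ) (hρ0 : 0 < ρ) (hρ1 : ρ < 1) (hδmax : 0 < δmax)
    (τ : ℕ) (hτ : 1 ≤ τ) (T₁ T₂ : ℤ) (hT₂ : T₁ + (τ : ℤ) < T₂)
    (δ : ℤ → ℝ)
    (hδ : ∀ s : ℤ, δ s =
      if T₁ ≤ s ∧ s ≤ T₁ + (τ : ℤ) then δmax * ((s : ℝ) - (T₁ : ℝ)) / (τ : ℝ)
      else if T₁ + (τ : ℤ) < s ∧ s ≤ T₂ then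
        δmax * ((T₂ : ℝ) - (s : ℝ)) / ((T₂ : ℝ) - (T₁ : ℝ) - (τ : ℝ))
      else 0)
    (T : ℤ → ℝ) (hT : ∀ t : ℤ, T t = ∑' j : ℕ, ρ ^ j * δ (t + 1 + (j : ℤ))) :
    ∀ t : ℤ, T₁ + 1 ≤ t → t ≤ T₁ + (τ : ℤ) - 1 →
      (T t - 2 * T (t - 1) + T (t - 2) =
        δmax * ρ ^ (T₁ + (τ : ℤ) - t).toNat *
          (-(1 / (τ : ℝ)) +
            (ρ ^ (T₂ - T₁ - (τ : ℤ)).toNat - 1) / ((T₂ : ℝ) - (T₁ : ℝ) - (τ : ℝ)))) ∧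
      T t - 2 * T (t - 1) + T (t - 2) < 0 := by
  intro t ht₁ ht₂
  obtain rfl : δ = triangularShock δmax τ T₁ T₂ := funext hδ
  obtain rfl : T = presentValue ρ (triangularShock δmax τ T₁ T₂) := funext hT
  have hΔ := secondDiff_presentValue_triangularShock (ρ := ρ) (δmax := δmax) hτ hT₂ ht₁ (by omega)
  refine ⟨hΔ, ?_⟩
  have hD := cast_sub_sub_pos_of_add_lt hT₂
  have hρd : ρ ^ (T₂ - T₁ - τ).toNat < 1 := pow_lt_one₀ hρ0.le hρ1 (by omega)
  have hdecay : (ρ ^ (T₂ - T₁ - τ).toNat - 1) / ((T₂ : ℝ) - T₁ - τ) < 0 :=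
    div_neg_of_neg_of_pos (by linarith) hD
  have hτ' : 0 < 1 / (τ : ℝ) := by positivity
  rw [← secondDiff, hΔ]
  exact mul_neg_of_pos_of_neg (by positivity) (by linarith)
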